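/- arXiv:1308.4605 — 9 statements merged into one kernel-verified Lean document; each statement's English description precedes it below -/
import Mathlib

section
/- Let M = [[A, G], [-D, 0]] with A and S = -D A^{-1} G invertible, and let P2 be the lower block-triangular matrix [[A, 0], [-D, -S]]. Then P2^{-1} M equals the block upper triangular matrix [[I, A^{-1} G], [0, I]], and consequently (P2^{-1} M - I)^2 has lower-left block -S^{-1} D (A^{-1} G)·0 = 0; in fact (P2^{-1}M - I)^2 = 0. -/
/-!
Block LU factorisation with pivot `A` gives `M = P2 * [[I, A⁻¹ G], [0, I]]`, the lower-right
block of `P2` being the Schur complement `0 - (-D) A⁻¹ G = -S`. Since `A` and `S` are invertible,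
so is `P2`, and `[[I, A⁻¹ G], [0, I]] - I = [[0, A⁻¹ G], [0, 0]]` squares to zero.
-/

open Matrix

namespace Matrix

variable {l o α : Type*} [Fintype l] [Fintype o] [DecidableEq l] [DecidableEq o]

theorem fromBlocks_eq_fromBlocks_zero₁₂_mul_fromBlocks_one [CommRing α]
    {A : Matrix l l α} (hA : IsUnit A.det) (B : Matrix l o α) (C : Matrix o l α)
    (D : Matrix o o α) :
    fromBlocks A B C D = fromBlocks A 0 C (D - C * A⁻¹ * B) * fromBlocks 1 (A⁻¹ * B) 0 1 := by
  rw [fromBlocks_multiply, mul_nonsing_inv_cancel_left _ _ hA, Matrix.mul_assoc]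
  simp

theorem isUnit_det_fromBlocks_zero₁₂ [CommRing α] {A : Matrix l l α} {D : Matrix o o α}
    (hA : IsUnit A.det) (hD : IsUnit D.det) (C : Matrix o l α) :
    IsUnit (fromBlocks A 0 C D).det := by
  rw [det_fromBlocks_zero₁₂]
  exact hA.mul hD

theorem fromBlocks_one_sub_one_sq [Ring α] (B : Matrix l o α) :
    (fromBlocks 1 B 0 1 - 1 : Matrix (l ⊕ o) (l ⊕ o) α) ^ 2 = 0 := by
  rw [← fromBlocks_one, sub_eq_add_neg, fromBlocks_neg, fromBlocks_add, sq,
    fromBlocks_multiply]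
  simp

end Matrix

theorem stmt_2 {n m : ℕ}
    (A : Matrix (Fin n) (Fin n) ℝ) (G : Matrix (Fin n) (Fin m) ℝ)
    (D : Matrix (Fin m) (Fin n) ℝ)
    (S : Matrix (Fin m) (Fin m) ℝ) (hSdef : S = -(D * A⁻¹ * G))
    (hA : IsUnit A.det) (hS : IsUnit S.det)
    (M P2 : Matrix (Fin n ⊕ Fin m) (Fin n ⊕ Fin m) ℝ)
    (hM : M = Matrix.fromBlocks A G (-D) (0 : Matrix (Fin m) (Fin m) ℝ))
    (hP2 : P2 = Matrix.fromBlocks A (0 : Matrix (Fin n) (Fin m) ℝ) (-D) (-S)) :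
    P2⁻¹ * M = Matrix.fromBlocks (1 : Matrix (Fin n) (Fin n) ℝ) (A⁻¹ * G)
        (0 : Matrix (Fin m) (Fin n) ℝ) (1 : Matrix (Fin m) (Fin m) ℝ) ∧
      (P2⁻¹ * M - 1) ^ 2 = 0 := by
  have hM_factor : M = P2 * fromBlocks 1 (A⁻¹ * G) 0 1 := by
    rw [hM, hP2, fromBlocks_eq_fromBlocks_zero₁₂_mul_fromBlocks_one hA, hSdef]
    simp [Matrix.neg_mul]
  have hP2_det : IsUnit P2.det := by
    rw [hP2]
    refine isUnit_det_fromBlocks_zero₁₂ hA ?_ _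
    rw [det_neg]
    exact (isUnit_one.neg.pow _).mul hS
  have hP2_inv_M : P2⁻¹ * M = fromBlocks 1 (A⁻¹ * G) 0 1 := by
    rw [hM_factor, nonsing_inv_mul_cancel_left _ _ hP2_det]
  exact ⟨hP2_inv_M, hP2_inv_M ▸ fromBlocks_one_sub_one_sq _⟩
end

section
/- Let M = [[A, G], [-D, 0]] with A and S = -D A^{-1} G invertible, and let P3 be the upper block-triangular matrix [[A, G], [0, -S]]. Then the matrix T = P3^{-1} M satisfies (T - I)(T^2 - I) = 0. -/
open Matrix

theorem stmt_3 {n m : ℕ}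
    (A : Matrix (Fin n) (Fin n) ℝ) (G : Matrix (Fin n) (Fin m) ℝ)
    (D : Matrix (Fin m) (Fin n) ℝ)
    (S : Matrix (Fin m) (Fin m) ℝ) (hSdef : S = -(D * A⁻¹ * G))
    (hA : IsUnit A.det) (hS : IsUnit S.det)
    (M P3 T : Matrix (Fin n ⊕ Fin m) (Fin n ⊕ Fin m) ℝ)
    (hM : M = Matrix.fromBlocks A G (-D) (0 : Matrix (Fin m) (Fin m) ℝ))
    (hP3 : P3 = Matrix.fromBlocks A G (0 : Matrix (Fin m) (Fin n) ℝ) (-S))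
    (hT : T = P3⁻¹ * M) :
    (T - 1) * (T ^ 2 - 1) = 0 := by
  set B := A⁻¹ * G with hB
  set C := S⁻¹ * D with hC
  have hDAG : D * A⁻¹ * G = -S := by rw [hSdef, neg_neg]
  have hCB : C * B = -1 := by
    rw [hC, hB, Matrix.mul_assoc S⁻¹ D (A⁻¹ * G), ← Matrix.mul_assoc D A⁻¹ G,
      hDAG, Matrix.mul_neg, Matrix.nonsing_inv_mul S hS]
  have hAinv : A * A⁻¹ = 1 := Matrix.mul_nonsing_inv A hA
  have hinvA : A⁻¹ * A = 1 := Matrix.nonsing_inv_mul A hA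
  have hP3inv : P3⁻¹ = Matrix.fromBlocks A⁻¹ (B * S⁻¹)
      (0 : Matrix (Fin m) (Fin n) ℝ) (-S⁻¹) := by
    apply Matrix.inv_eq_right_inv
    rw [hP3, Matrix.fromBlocks_multiply]
    have h2 : A * (B * S⁻¹) = G * S⁻¹ := by
      rw [hB, ← Matrix.mul_assoc, ← Matrix.mul_assoc, hAinv, Matrix.one_mul]
    have h3 : (-S) * (-S⁻¹) = 1 := by
      rw [Matrix.neg_mul, Matrix.mul_neg, neg_neg, Matrix.mul_nonsing_inv S hS]
    rw [h2, h3, ← Matrix.fromBlocks_one]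
    congr 1 <;> simp [hAinv, Matrix.mul_neg]
  have hT' : T = Matrix.fromBlocks (1 - B * C) B C 0 := by
    rw [hT, hP3inv, hM, Matrix.fromBlocks_multiply]
    have h4 : B * S⁻¹ * (-D) = -(B * C) := by
      rw [hC, Matrix.mul_neg, Matrix.mul_assoc]
    have h5 : (-S⁻¹) * (-D) = C := by
      rw [hC, Matrix.neg_mul, Matrix.mul_neg, neg_neg]
    rw [h4, h5, hinvA]
    congr 1 <;> simp [sub_eq_add_neg, Matrix.mul_neg, ← hB]
  have hTm1 : T - 1 = Matrix.fromBlocks (-(B * C)) B C (-1) := by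
    rw [hT', ← Matrix.fromBlocks_one, sub_eq_add_neg, Matrix.fromBlocks_neg,
      Matrix.fromBlocks_add]
    rw [show (1 - B * C) + (-1 : Matrix (Fin n) (Fin n) ℝ) = -(B * C) from by abel]
    simp
  have key : (T - 1) * (T - 1) = 0 := by
    rw [hTm1, Matrix.fromBlocks_multiply]
    have e11 : -(B * C) * -(B * C) + B * C = 0 := by
      have hq : B * C * (B * C) = -(B * C) := by
        rw [Matrix.mul_assoc B C (B * C), ← Matrix.mul_assoc C B C, hCB,
          Matrix.neg_mul, Matrix.one_mul, Matrix.mul_neg, ← Matrix.mul_assoc]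
      rw [neg_mul_neg, hq]
      abel
    have e12 : -(B * C) * B + B * (-1 : Matrix (Fin m) (Fin m) ℝ) = 0 := by
      have hq : B * C * B = -B := by
        rw [Matrix.mul_assoc, hCB, Matrix.mul_neg, Matrix.mul_one]
      rw [Matrix.neg_mul, hq, neg_neg]
      simp [Matrix.mul_neg]
    have e21 : C * -(B * C) + (-1 : Matrix (Fin m) (Fin m) ℝ) * C = 0 := by
      have hq : C * (B * C) = -C := by
        rw [← Matrix.mul_assoc, hCB, Matrix.neg_mul, Matrix.one_mul]
      rw [Matrix.mul_neg, hq, neg_neg]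
      simp [Matrix.neg_mul]
    have e22 : C * B + (-1 : Matrix (Fin m) (Fin m) ℝ) * (-1) = 0 := by
      rw [hCB, neg_mul_neg, mul_one]
      abel
    rw [e11, e12, e21, e22, Matrix.fromBlocks_zero]
  have factor : T ^ 2 - 1 = (T - 1) * (T + 1) := by noncomm_ring
  rw [factor, ← Matrix.mul_assoc, key, Matrix.zero_mul]
end

section
/- Let P_- = [[A, 0], [-D, -S]] with S = -D A^{-1} G. Then T_- = P_-^{-1} M satisfies (T_- - I)^2 = 0, i.e., T_- - I is nilpotent of index at most 2. -/
/-! The lower block-triangular preconditioner is a right factor of `M` up to a block-unipotent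
matrix: `P₋ * [[1, A⁻¹G], [0, 1]] = M`, because the lower-right block of the product is
`-D A⁻¹ G - S = 0`. Hence `T₋ = P₋⁻¹ M = [[1, A⁻¹G], [0, 1]]`, and `T₋ - 1 = [[0, A⁻¹G], [0, 0]]`
squares to zero. -/

open Matrix

namespace Matrix

variable {ι κ R : Type*} [Fintype ι] [Fintype κ] [DecidableEq ι] [DecidableEq κ]

theorem fromBlocks_one_zero_one_sub_one_sq [Ring R] (B : Matrix ι κ R) :
    (fromBlocks 1 B 0 1 - 1 : Matrix (ι ⊕ κ) (ι ⊕ κ) R) ^ 2 = 0 := by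
  rw [← fromBlocks_one, sub_eq_add_neg, fromBlocks_neg, fromBlocks_add, pow_two,
    fromBlocks_multiply]
  simp

variable [CommRing R]

theorem fromBlocks_zero₁₂_mul_unipotent_of_schur {A : Matrix ι ι R} {G : Matrix ι κ R}
    {D : Matrix κ ι R} {S : Matrix κ κ R} (hS : S = -(D * A⁻¹ * G)) (hA : IsUnit A.det) :
    fromBlocks A 0 (-D) (-S) * fromBlocks 1 (A⁻¹ * G) 0 1 = fromBlocks A G (-D) 0 := by
  rw [fromBlocks_multiply, ← Matrix.mul_assoc, mul_nonsing_inv A hA, hS]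
  simp [Matrix.mul_assoc]

theorem isUnit_det_fromBlocks_zero₁₂_neg {A : Matrix ι ι R} {D : Matrix κ ι R}
    {S : Matrix κ κ R} (hA : IsUnit A.det) (hS : IsUnit S.det) :
    IsUnit (fromBlocks A 0 (-D) (-S)).det := by
  rw [det_fromBlocks_zero₁₂, det_neg]
  exact hA.mul ((isUnit_neg_one.pow _).mul hS)

end Matrix

theorem stmt_5 {n m : ℕ}
    (A : Matrix (Fin n) (Fin n) ℝ) (G : Matrix (Fin n) (Fin m) ℝ)
    (D : Matrix (Fin m) (Fin n) ℝ)
    (S : Matrix (Fin m) (Fin m) ℝ) (hSdef : S = -(D * A⁻¹ * G))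
    (hA : IsUnit A.det) (hS : IsUnit S.det)
    (M Pminus Tminus : Matrix (Fin n ⊕ Fin m) (Fin n ⊕ Fin m) ℝ)
    (hM : M = Matrix.fromBlocks A G (-D) (0 : Matrix (Fin m) (Fin m) ℝ))
    (hP : Pminus = Matrix.fromBlocks A (0 : Matrix (Fin n) (Fin m) ℝ) (-D) (-S))
    (hT : Tminus = Pminus⁻¹ * M) :
    (Tminus - 1) ^ 2 = 0 := by
  have hTminus : Tminus = fromBlocks 1 (A⁻¹ * G) 0 1 := by
    rw [hT, hM, hP, ← fromBlocks_zero₁₂_mul_unipotent_of_schur hSdef hA,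
      nonsing_inv_mul_cancel_left _ _ (isUnit_det_fromBlocks_zero₁₂_neg hA hS)]
  rw [hTminus, fromBlocks_one_zero_one_sub_one_sq]
end

section
/- If the exact Schur complement and exact velocity solver are used in the lower-triangular preconditioner P_- = [[A,0],[-D,-S]], then GMRES applied to P_-^{-1} M x = P_-^{-1} b converges in at most 2 iterations; formally, since (P_-^{-1}M - I)^2 = 0, for any vector b, the Krylov subspace span{b, (P_-^{-1}M) b, (P_-^{-1}M)^2 b, ...} has dimension at most 2, i.e., (P_-^{-1}M)^2 b lies in the span of b and (P_-^{-1}M) b. -/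
/-!
A block lower-triangular preconditioner carrying the exact Schur complement is the
lower-triangular half of the block LU factorisation `M = P U`, with `U = [[I, A⁻¹G], [0, I]]`.
Hence `P⁻¹ M = U`, and `U - I` squares to zero, so `U² = 2U - I`.
-/

open Matrix

namespace Matrix

variable {l m R : Type*} [Fintype l] [Fintype m] [DecidableEq l] [DecidableEq m] [CommRing R]

theorem fromBlocks_eq_fromBlocks_zero₁₂_mul (A : Matrix l l R) (B : Matrix l m R)
    (C : Matrix m l R) (E : Matrix m m R) (hA : IsUnit A.det) :
    fromBlocks A B C E = fromBlocks A 0 C (E - C * A⁻¹ * B) * fromBlocks 1 (A⁻¹ * B) 0 1 := by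
  rw [fromBlocks_multiply, ← Matrix.mul_assoc, mul_nonsing_inv A hA]
  simp [Matrix.mul_assoc]

theorem inv_fromBlocks_schur_mul_fromBlocks (A : Matrix l l R) (B : Matrix l m R)
    (C : Matrix m l R) (E : Matrix m m R) (hA : IsUnit A.det)
    (hS : IsUnit (E - C * A⁻¹ * B).det) :
    (fromBlocks A 0 C (E - C * A⁻¹ * B))⁻¹ * fromBlocks A B C E = fromBlocks 1 (A⁻¹ * B) 0 1 := by
  have hP : IsUnit (fromBlocks A 0 C (E - C * A⁻¹ * B)).det := by
    rw [det_fromBlocks_zero₁₂]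
    exact hA.mul hS
  rw [fromBlocks_eq_fromBlocks_zero₁₂_mul A B C E hA, ← Matrix.mul_assoc, nonsing_inv_mul _ hP,
    Matrix.one_mul]

theorem fromBlocks_one_zero_one_mul_self (B : Matrix l m R) :
    (fromBlocks 1 B 0 1 : Matrix (l ⊕ m) (l ⊕ m) R) * fromBlocks 1 B 0 1 =
      (2 : R) • fromBlocks 1 B 0 1 - 1 := by
  rw [fromBlocks_multiply, ← fromBlocks_one, fromBlocks_smul, sub_eq_add_neg, fromBlocks_neg,
    fromBlocks_add]
  congr 1 <;> simp [two_smul]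

end Matrix

theorem stmt_6 {n m : ℕ}
    (A : Matrix (Fin n) (Fin n) ℝ) (G : Matrix (Fin n) (Fin m) ℝ)
    (D : Matrix (Fin m) (Fin n) ℝ)
    (S : Matrix (Fin m) (Fin m) ℝ) (hSdef : S = -(D * A⁻¹ * G))
    (hA : IsUnit A.det) (hS : IsUnit S.det)
    (M Pminus T : Matrix (Fin n ⊕ Fin m) (Fin n ⊕ Fin m) ℝ)
    (hM : M = Matrix.fromBlocks A G (-D) (0 : Matrix (Fin m) (Fin m) ℝ))
    (hP : Pminus = Matrix.fromBlocks A (0 : Matrix (Fin n) (Fin m) ℝ) (-D) (-S))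
    (hT : T = Pminus⁻¹ * M) :
    ∀ b : Fin n ⊕ Fin m → ℝ, ∃ a c : ℝ,
      (T * T).mulVec b = a • b + c • T.mulVec b := by
  have hschur : -S = 0 - -D * A⁻¹ * G := by simp [hSdef, Matrix.neg_mul]
  have hschur_unit : IsUnit (0 - -D * A⁻¹ * G).det := by
    rw [← hschur, det_neg]
    exact ((isUnit_neg_one (α := ℝ)).pow _).mul hS
  have hTT : T * T = (2 : ℝ) • T - 1 := by
    rw [hT, hP, hM, hschur, inv_fromBlocks_schur_mul_fromBlocks A G (-D) 0 hA hschur_unit]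
    exact fromBlocks_one_zero_one_mul_self _
  intro b
  refine ⟨-1, 2, ?_⟩
  rw [hTT, sub_mulVec, smul_mulVec, one_mulVec]
  module
end

section
/- Suppose the operators D, G, L, L_p satisfy the commuting relations G L_p = L G and L_p D = D L, with A = θρ₀ I - μ₀ L invertible and L_p = D G invertible. Then the Schur complement S = -D A^{-1} G satisfies S = -(θρ₀ I - μ₀ L_p)^{-1} L_p, provided θρ₀ I - μ₀ L_p is invertible; equivalently S^{-1} = -θρ₀ L_p^{-1} + μ₀ I. -/
/-! The relation `Lp D = D L` makes `D` intertwine `A = θρ₀ - μ₀ L` with `B = θρ₀ - μ₀ Lp`,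
i.e. `B D = D A`, hence `D A⁻¹ = B⁻¹ D` and `D A⁻¹ G = B⁻¹ D G = B⁻¹ Lp`. Inverting,
`S⁻¹ = -Lp⁻¹ B = -θρ₀ Lp⁻¹ + μ₀`. -/

open Matrix

namespace Matrix

variable {m n R : Type*} [Fintype m] [Fintype n] [DecidableEq m] [DecidableEq n] [CommRing R]

theorem smul_one_sub_smul_mul_eq_mul_smul_one_sub_smul {P : Matrix m m R} {L : Matrix n n R}
    {D : Matrix m n R} (h : P * D = D * L) (c μ : R) :
    (c • 1 - μ • P) * D = D * (c • 1 - μ • L) := by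
  simp only [Matrix.sub_mul, Matrix.mul_sub, Matrix.smul_mul, Matrix.mul_smul, Matrix.one_mul,
    Matrix.mul_one, h]

theorem mul_inv_eq_inv_mul_of_mul_eq_mul {B : Matrix m m R} {A : Matrix n n R}
    {D : Matrix m n R} (hA : IsUnit A.det) (hB : IsUnit B.det) (h : B * D = D * A) :
    D * A⁻¹ = B⁻¹ * D :=
  calc D * A⁻¹ = B⁻¹ * (B * D) * A⁻¹ := by
        rw [← Matrix.mul_assoc, nonsing_inv_mul B hB, Matrix.one_mul]
    _ = B⁻¹ * D := by
        rw [h, Matrix.mul_assoc, Matrix.mul_assoc, mul_nonsing_inv A hA, Matrix.mul_one]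

theorem inv_neg_inv_mul {B P : Matrix m m R} (hB : IsUnit B.det) (hP : IsUnit P.det) :
    (-(B⁻¹ * P))⁻¹ = -(P⁻¹ * B) := by
  refine inv_eq_right_inv ?_
  rw [neg_mul_neg, Matrix.mul_assoc, ← Matrix.mul_assoc P, mul_nonsing_inv P hP, Matrix.one_mul,
    nonsing_inv_mul B hB]

end Matrix

theorem stmt_7_general {n m : ℕ}
    (D : Matrix (Fin m) (Fin n) ℝ) (G : Matrix (Fin n) (Fin m) ℝ)
    (L : Matrix (Fin n) (Fin n) ℝ) (θ ρ₀ μ₀ : ℝ)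
    (Lp : Matrix (Fin m) (Fin m) ℝ) (hLp : Lp = D * G)
    (A : Matrix (Fin n) (Fin n) ℝ)
    (hAdef : A = (θ * ρ₀) • (1 : Matrix (Fin n) (Fin n) ℝ) - μ₀ • L)
    (hcomm2 : Lp * D = D * L)
    (hA : IsUnit A.det) (hLpU : IsUnit Lp.det)
    (hB : IsUnit ((θ * ρ₀) • (1 : Matrix (Fin m) (Fin m) ℝ) - μ₀ • Lp).det)
    (S : Matrix (Fin m) (Fin m) ℝ) (hSdef : S = -(D * A⁻¹ * G)) :
    S = -(((θ * ρ₀) • (1 : Matrix (Fin m) (Fin m) ℝ) - μ₀ • Lp)⁻¹ * Lp) ∧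
      S⁻¹ = -((θ * ρ₀) • Lp⁻¹) + μ₀ • (1 : Matrix (Fin m) (Fin m) ℝ) := by
  have hDA : D * A⁻¹ = ((θ * ρ₀) • 1 - μ₀ • Lp)⁻¹ * D := by
    subst hAdef
    exact mul_inv_eq_inv_mul_of_mul_eq_mul hA hB
      (smul_one_sub_smul_mul_eq_mul_smul_one_sub_smul hcomm2 _ _)
  have hS : S = -(((θ * ρ₀) • 1 - μ₀ • Lp)⁻¹ * Lp) := by
    rw [hSdef, hDA, hLp, Matrix.mul_assoc]
  refine ⟨hS, ?_⟩
  rw [hS, inv_neg_inv_mul hB hLpU, mul_sub, Matrix.mul_smul, Matrix.mul_smul, mul_one,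
    nonsing_inv_mul Lp hLpU, neg_sub, sub_eq_neg_add]

theorem stmt_7 {n m : ℕ}
    (D : Matrix (Fin m) (Fin n) ℝ) (G : Matrix (Fin n) (Fin m) ℝ)
    (L : Matrix (Fin n) (Fin n) ℝ) (θ ρ₀ μ₀ : ℝ)
    (Lp : Matrix (Fin m) (Fin m) ℝ) (hLp : Lp = D * G)
    (A : Matrix (Fin n) (Fin n) ℝ)
    (hAdef : A = (θ * ρ₀) • (1 : Matrix (Fin n) (Fin n) ℝ) - μ₀ • L)
    (hcomm1 : G * Lp = L * G) (hcomm2 : Lp * D = D * L)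
    (hA : IsUnit A.det) (hLpU : IsUnit Lp.det)
    (hB : IsUnit ((θ * ρ₀) • (1 : Matrix (Fin m) (Fin m) ℝ) - μ₀ • Lp).det)
    (S : Matrix (Fin m) (Fin m) ℝ) (hSdef : S = -(D * A⁻¹ * G)) :
    S = -(((θ * ρ₀) • (1 : Matrix (Fin m) (Fin m) ℝ) - μ₀ • Lp)⁻¹ * Lp) ∧
      S⁻¹ = -((θ * ρ₀) • Lp⁻¹) + μ₀ • (1 : Matrix (Fin m) (Fin m) ℝ) :=
  stmt_7_general D G L θ ρ₀ μ₀ Lp hLp A hAdef hcomm2 hA hLpU hB S hSdef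
end

section
/- In the inviscid case μ₀ = 0, let A = θρ with ρ an invertible n×n matrix and θ ≠ 0, let M = [[θρ, G], [-D, 0]], and let L_ρ = D ρ^{-1} G be invertible; define x_u := ρ^{-1}b_u/θ - ρ^{-1} G L_ρ^{-1}(D ρ^{-1} b_u/θ + b_p) and x_p := θ L_ρ^{-1}(D ρ^{-1}b_u/θ + b_p); then θρ x_u + G x_p = b_u and -D x_u = b_p. -/
open Matrix

theorem stmt_8 {n m : ℕ}
    (ρ : Matrix (Fin n) (Fin n) ℝ) (hρ : IsUnit ρ.det)
    (θ : ℝ) (hθ : θ ≠ 0)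
    (G : Matrix (Fin n) (Fin m) ℝ) (D : Matrix (Fin m) (Fin n) ℝ)
    (Lρ : Matrix (Fin m) (Fin m) ℝ) (hLρdef : Lρ = D * ρ⁻¹ * G)
    (hLρ : IsUnit Lρ.det)
    (bu : Fin n → ℝ) (bp : Fin m → ℝ)
    (xu : Fin n → ℝ) (xp : Fin m → ℝ)
    (hxu : xu = θ⁻¹ • ρ⁻¹.mulVec bu -
      ρ⁻¹.mulVec (G.mulVec (Lρ⁻¹.mulVec
        (θ⁻¹ • D.mulVec (ρ⁻¹.mulVec bu) + bp))))
    (hxp : xp = θ • Lρ⁻¹.mulVec (θ⁻¹ • D.mulVec (ρ⁻¹.mulVec bu) + bp)) :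
    θ • ρ.mulVec xu + G.mulVec xp = bu ∧ -(D.mulVec xu) = bp := by
  have h1 : ρ * ρ⁻¹ = 1 := Matrix.mul_nonsing_inv ρ hρ
  have h2 : Lρ * Lρ⁻¹ = 1 := Matrix.mul_nonsing_inv Lρ hLρ
  set w := θ⁻¹ • D.mulVec (ρ⁻¹.mulVec bu) + bp with hw
  have key : ∀ v : Fin n → ℝ, ρ.mulVec (ρ⁻¹.mulVec v) = v := by
    intro v; rw [mulVec_mulVec, h1, one_mulVec]
  have key2 : D.mulVec (ρ⁻¹.mulVec (G.mulVec (Lρ⁻¹.mulVec w))) = w := by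
    rw [mulVec_mulVec, mulVec_mulVec, mulVec_mulVec, Matrix.mul_assoc D,
      ← Matrix.mul_assoc, ← hLρdef, h2, one_mulVec]
  constructor
  · rw [hxu, hxp, mulVec_sub, smul_sub, mulVec_smul, key, key, smul_smul,
      mul_inv_cancel₀ hθ, one_smul, mulVec_smul]
    abel
  · rw [hxu, mulVec_sub, key2, hw, mulVec_smul]
    ext i
    simp [Pi.sub_apply, Pi.add_apply]
end

section
/- If a matrix T of size N×N satisfies that T - I has rank r, then any Krylov method with the Galerkin property applied to T converges in at most r+1 iterations; formally, the minimal polynomial of T has degree at most r+1. -/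
/-!
The range `W` of `f - μ` is `f`-invariant, so the minimal polynomial `q` of `f` restricted to `W`
has degree at most `dim W`. Since `f - μ` maps everything into `W`, the polynomial
`q * (X - μ)` annihilates `f`, and the minimal polynomial of `f` divides it.
-/

open Polynomial

namespace Module.End

variable {K V : Type*} [Field K] [AddCommGroup V] [Module K V]

lemma aeval_restrict_apply {R M : Type*} [CommSemiring R] [AddCommMonoid M] [Module R M]
    (f : Module.End R M) {W : Submodule R M} (hW : ∀ x ∈ W, f x ∈ W) (p : R[X]) (w : W) :
    (aeval (f.restrict hW) p w : M) = aeval f p (w : M) := by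
  induction p using Polynomial.induction_on' with
  | add p q hp hq => simp [hp, hq]
  | monomial n a => simp [Module.End.pow_restrict n hW, Module.algebraMap_end_apply]

lemma natDegree_minpoly_le_finrank [FiniteDimensional K V] (f : Module.End K V) :
    (minpoly K f).natDegree ≤ finrank K V :=
  f.charpoly_natDegree ▸
    natDegree_le_of_dvd (LinearMap.minpoly_dvd_charpoly f) f.charpoly_monic.ne_zero

theorem natDegree_minpoly_le_finrank_range_sub_add_one [FiniteDimensional K V]
    (f : Module.End K V) (μ : K) :
    (minpoly K f).natDegree ≤ finrank K (LinearMap.range (f - algebraMap K _ μ)) + 1 := by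
  set g := f - algebraMap K (Module.End K V) μ
  have hW : ∀ x ∈ LinearMap.range g, f x ∈ LinearMap.range g := by
    rintro _ ⟨y, rfl⟩
    exact ⟨f y, by simp [g, Module.algebraMap_end_apply]⟩
  set q := minpoly K (f.restrict hW)
  have hq : q.Monic := minpoly.monic (Algebra.IsIntegral.isIntegral _)
  have hkill : aeval f (q * (X - C μ)) = 0 := by
    ext v
    have h := aeval_restrict_apply f hW q ⟨g v, v, rfl⟩
    rw [minpoly.aeval, LinearMap.zero_apply, ZeroMemClass.coe_zero] at h
    simpa [g, Module.algebraMap_end_apply] using h.symm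
  calc (minpoly K f).natDegree
      ≤ (q * (X - C μ)).natDegree :=
        natDegree_le_of_dvd (minpoly.dvd K f hkill) (hq.mul (monic_X_sub_C μ)).ne_zero
    _ = q.natDegree + 1 := by
        rw [hq.natDegree_mul (monic_X_sub_C μ), natDegree_X_sub_C]
    _ ≤ _ := by gcongr; exact natDegree_minpoly_le_finrank _

end Module.End

theorem stmt_11 {K : Type*} [Field K] {N : ℕ}
    (T : Matrix (Fin N) (Fin N) K) (r : ℕ) (hr : (T - 1).rank = r) :
    (minpoly K T).natDegree ≤ r + 1 := by
  have h := Module.End.natDegree_minpoly_le_finrank_range_sub_add_one (Matrix.toLin' T) 1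
  have hsub : Matrix.toLin' T - 1 = Matrix.toLin' (T - 1) := by
    rw [map_sub, Matrix.toLin'_one]; rfl
  rwa [Matrix.minpoly_toLin', map_one, hsub, Matrix.toLin'_apply', ← Matrix.rank, hr] at h
end

section
/- For the stress-tensor form of the viscous operator with constant viscosity μ₀, the Fourier symbol of the Schur complement is 2μ₀: with L̂_μ = μ₀ [[2d̂_x² + d̂_y², d̂_x d̂_y], [d̂_x d̂_y, d̂_x² + 2d̂_y²]], D̂ = [d̂_x, d̂_y], Ĝ = [d̂_x, d̂_y]^T, and assuming L̂_μ is invertible and d̂_x² + d̂_y² ≠ 0, one has (D̂ L̂_μ^{-1} Ĝ)^{-1} = 2μ₀. -/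
/-!
The symbol is `L = μ (⟨d, d⟩ I + d dᵀ)` with `d = (d̂_x, d̂_y)`, so `d` is an eigenvector:
`L d = 2 μ ⟨d, d⟩ d`. Invertibility of `L` forces `2 μ ⟨d, d⟩ ≠ 0`, hence
`L⁻¹ d = (2 μ ⟨d, d⟩)⁻¹ d` and `D L⁻¹ G = ⟨d, L⁻¹ d⟩ = (2 μ)⁻¹`. Here `⟨d, d⟩ = d ⬝ᵥ d` is
bilinear, not Hermitian.
-/

open Matrix

section StressTensorSymbol

variable {K n : Type*} [Field K] [Fintype n] [DecidableEq n]

def stressTensorSymbol (μ : K) (d : n → K) : Matrix n n K :=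
  μ • ((d ⬝ᵥ d) • 1 + vecMulVec d d)

theorem stressTensorSymbol_mulVec_self (μ : K) (d : n → K) :
    stressTensorSymbol μ d *ᵥ d = (2 * μ * (d ⬝ᵥ d)) • d := by
  rw [stressTensorSymbol, smul_mulVec, add_mulVec, smul_mulVec, one_mulVec, vecMulVec_mulVec,
    op_smul_eq_smul, ← two_smul K, smul_smul, smul_smul, mul_comm μ]

theorem eq_smul_stressTensorSymbol_inv_mulVec_self {μ : K} {d : n → K}
    (h : IsUnit (stressTensorSymbol μ d).det) :
    d = (2 * μ * (d ⬝ᵥ d)) • ((stressTensorSymbol μ d)⁻¹ *ᵥ d) := by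
  rw [← mulVec_smul, ← stressTensorSymbol_mulVec_self, mulVec_mulVec, nonsing_inv_mul _ h,
    one_mulVec]

theorem two_mul_mul_dotProduct_self_ne_zero [Nonempty n] {μ : K} {d : n → K}
    (h : IsUnit (stressTensorSymbol μ d).det) : 2 * μ * (d ⬝ᵥ d) ≠ 0 := by
  intro h0
  have hd : d = 0 := by simpa [h0] using eq_smul_stressTensorSymbol_inv_mulVec_self h
  subst hd
  simp [stressTensorSymbol] at h

theorem dotProduct_stressTensorSymbol_inv_mulVec_self [Nonempty n] {μ : K} {d : n → K}
    (h : IsUnit (stressTensorSymbol μ d).det) :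
    d ⬝ᵥ ((stressTensorSymbol μ d)⁻¹ *ᵥ d) = (2 * μ)⁻¹ := by
  have h0 := two_mul_mul_dotProduct_self_ne_zero h
  have hd := congrArg (d ⬝ᵥ ·) (eq_smul_stressTensorSymbol_inv_mulVec_self h)
  simp only [dotProduct_smul, smul_eq_mul] at hd
  refine eq_inv_of_mul_eq_one_right (mul_left_cancel₀ (right_ne_zero_of_mul h0) ?_)
  linear_combination -hd

theorem inv_replicateRow_mul_stressTensorSymbol_inv_mul_replicateCol
    {ι : Type*} [Fintype ι] [DecidableEq ι] [Subsingleton ι] [Nonempty n] {μ : K} {d : n → K}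
    (h : IsUnit (stressTensorSymbol μ d).det) :
    (replicateRow ι d * (stressTensorSymbol μ d)⁻¹ * replicateCol ι d)⁻¹ =
      (2 * μ) • (1 : Matrix ι ι K) := by
  have hμ : 2 * μ ≠ 0 := left_ne_zero_of_mul (two_mul_mul_dotProduct_self_ne_zero h)
  have hS : replicateRow ι d * (stressTensorSymbol μ d)⁻¹ * replicateCol ι d =
      (2 * μ)⁻¹ • (1 : Matrix ι ι K) := by
    ext i j
    rw [Subsingleton.elim i j, Matrix.mul_assoc, ← replicateCol_mulVec,
      replicateRow_mul_replicateCol_apply, dotProduct_stressTensorSymbol_inv_mulVec_self h]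
    simp
  rw [hS]
  refine inv_eq_left_inv ?_
  rw [smul_mul_smul_comm, Matrix.one_mul, mul_inv_cancel₀ hμ, one_smul]

theorem stressTensorSymbol_fin_two (μ dx dy : K) :
    stressTensorSymbol μ ![dx, dy] =
      μ • !![2 * dx ^ 2 + dy ^ 2, dx * dy; dx * dy, dx ^ 2 + 2 * dy ^ 2] := by
  rw [stressTensorSymbol]
  congr 1
  ext i j
  fin_cases i <;> fin_cases j <;> simp [dotProduct, Fin.sum_univ_two] <;> ring

end StressTensorSymbol

theorem stmt_13_general (dx dy : ℂ)
    (μ₀ : ℝ)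
    (Dh : Matrix (Fin 1) (Fin 2) ℂ) (hD : Dh = !![dx, dy])
    (Gh : Matrix (Fin 2) (Fin 1) ℂ) (hG : Gh = !![dx; dy])
    (Lh : Matrix (Fin 2) (Fin 2) ℂ)
    (hL : Lh = (μ₀ : ℂ) • !![2 * dx ^ 2 + dy ^ 2, dx * dy;
                             dx * dy, dx ^ 2 + 2 * dy ^ 2])
    (hLinv : IsUnit Lh.det) :
    (Dh * Lh⁻¹ * Gh)⁻¹ = (2 * μ₀ : ℂ) • (1 : Matrix (Fin 1) (Fin 1) ℂ) := by
  have hD' : Dh = replicateRow (Fin 1) ![dx, dy] := by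
    rw [hD]; ext i j; fin_cases i; fin_cases j <;> rfl
  have hG' : Gh = replicateCol (Fin 1) ![dx, dy] := by
    rw [hG]; ext i j; fin_cases i <;> fin_cases j <;> rfl
  rw [← stressTensorSymbol_fin_two] at hL
  subst hD' hG' hL
  exact inv_replicateRow_mul_stressTensorSymbol_inv_mul_replicateCol hLinv

theorem stmt_13 (dx dy : ℂ) (hd : dx ^ 2 + dy ^ 2 ≠ 0)
    (μ₀ : ℝ) (hμ : μ₀ ≠ 0)
    (Dh : Matrix (Fin 1) (Fin 2) ℂ) (hD : Dh = !![dx, dy])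
    (Gh : Matrix (Fin 2) (Fin 1) ℂ) (hG : Gh = !![dx; dy])
    (Lh : Matrix (Fin 2) (Fin 2) ℂ)
    (hL : Lh = (μ₀ : ℂ) • !![2 * dx ^ 2 + dy ^ 2, dx * dy;
                             dx * dy, dx ^ 2 + 2 * dy ^ 2])
    (hLinv : IsUnit Lh.det) :
    (Dh * Lh⁻¹ * Gh)⁻¹ = (2 * μ₀ : ℂ) • (1 : Matrix (Fin 1) (Fin 1) ℂ) :=
  stmt_13_general dx dy μ₀ Dh hD Gh hG Lh hL hLinv
end

section
/- For the viscous operator with bulk viscosity, let L̂_μ = [[(4μ₀/3 + γ₀)d̂_x² + μ₀ d̂_y², (μ₀/3 + γ₀)d̂_x d̂_y], [(μ₀/3 + γ₀)d̂_x d̂_y, μ₀ d̂_x² + (4μ₀/3 + γ₀)d̂_y²]], D̂ = [d̂_x, d̂_y] and Ĝ = D̂^T; assuming L̂_μ is invertible, d̂_x² + d̂_y² ≠ 0 and (4μ₀/3 + γ₀) ≠ 0, the Fourier symbol of the Schur complement satisfies (D̂ L̂_μ^{-1} Ĝ)^{-1} = (4/3)μ₀ + γ₀. -/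
open Matrix

theorem stmt_14 (dx dy : ℂ) (hd : dx ^ 2 + dy ^ 2 ≠ 0)
    (μ₀ γ₀ : ℝ) (hμγ : 4 * μ₀ / 3 + γ₀ ≠ 0)
    (Dh : Matrix (Fin 1) (Fin 2) ℂ) (hD : Dh = !![dx, dy])
    (Gh : Matrix (Fin 2) (Fin 1) ℂ) (hG : Gh = !![dx; dy])
    (Lh : Matrix (Fin 2) (Fin 2) ℂ)
    (hL : Lh = !![((4 * μ₀ / 3 + γ₀ : ℝ) : ℂ) * dx ^ 2 + (μ₀ : ℂ) * dy ^ 2,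
                  ((μ₀ / 3 + γ₀ : ℝ) : ℂ) * (dx * dy);
                  ((μ₀ / 3 + γ₀ : ℝ) : ℂ) * (dx * dy),
                  (μ₀ : ℂ) * dx ^ 2 + ((4 * μ₀ / 3 + γ₀ : ℝ) : ℂ) * dy ^ 2])
    (hLinv : IsUnit Lh.det) :
    (Dh * Lh⁻¹ * Gh)⁻¹ =
      ((4 * μ₀ / 3 + γ₀ : ℝ) : ℂ) • (1 : Matrix (Fin 1) (Fin 1) ℂ) := by
  set a : ℂ := ((4 * μ₀ / 3 + γ₀ : ℝ) : ℂ) with ha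
  have ha0 : a ≠ 0 := by
    simpa [ha] using (Complex.ofReal_ne_zero.mpr hμγ)
  set c : ℂ := a * (dx ^ 2 + dy ^ 2) with hc
  have hc0 : c ≠ 0 := mul_ne_zero ha0 hd
  have heig : Lh * Gh = c • Gh := by
    subst hL hG
    ext i j
    fin_cases i <;> fin_cases j <;>
      simp [Matrix.mul_apply, Fin.sum_univ_two, hc, ha] <;> push_cast <;> ring
  have hinvG : Lh⁻¹ * Gh = c⁻¹ • Gh := by
    have h1 : Lh⁻¹ * (Lh * Gh) = Gh := by
      rw [← Matrix.mul_assoc, Matrix.nonsing_inv_mul Lh hLinv, Matrix.one_mul]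
    rw [heig, Matrix.mul_smul] at h1
    have := congrArg (fun M => c⁻¹ • M) h1
    simpa [smul_smul, inv_mul_cancel₀ hc0] using this
  have hDG : Dh * Gh = (dx ^ 2 + dy ^ 2) • (1 : Matrix (Fin 1) (Fin 1) ℂ) := by
    subst hD hG
    ext i j
    fin_cases i <;> fin_cases j <;>
      simp [Matrix.mul_apply, Fin.sum_univ_two] <;> ring
  have hfinal : Dh * Lh⁻¹ * Gh = a⁻¹ • (1 : Matrix (Fin 1) (Fin 1) ℂ) := by
    rw [Matrix.mul_assoc, hinvG, Matrix.mul_smul, hDG, smul_smul, hc]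
    congr 1
    field_simp
  rw [hfinal]
  have : (a⁻¹ • (1 : Matrix (Fin 1) (Fin 1) ℂ)) = !![a⁻¹] := by
    ext i j; fin_cases i; fin_cases j; simp
  rw [this, Matrix.inv_def]
  simp [Matrix.det_fin_one, Matrix.adjugate_fin_one, Ring.inverse_eq_inv, inv_inv]
end
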